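/- arXiv:2107.11203 — 3 statements merged into one kernel-verified Lean document; each statement's English description precedes it below -/
import Mathlib

section
/- Let γ = γ_v * γ_w be the concatenation of two linear segments γ_v(t)=tv and γ_w(t)=tw in ℝ^d with v, w orthogonal and |v|=|w|=1/2. If X^n denotes the n-th signature term of γ, then the squared Hilbert-Schmidt norm of n!·X^n equals (2n)! / (2^{2n} (n!)^2). -/
open Finset

/-- The elementary tensor `u 0 ⊗ u 1 ⊗ ... ⊗ u (n-1)` realised in the
Hilbert-Schmidt model `EuclideanSpace ℝ (Fin n → Fin d)` of `(ℝ^d)^{⊗ n}`. -/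
noncomputable def tpow {d n : ℕ} (u : Fin n → EuclideanSpace ℝ (Fin d)) :
    EuclideanSpace ℝ (Fin n → Fin d) :=
  (WithLp.equiv 2 ((Fin n → Fin d) → ℝ)).symm
    (fun f => ∏ j, (WithLp.equiv 2 (Fin d → ℝ)) (u j) (f j))

lemma inner_tpow {d n : ℕ} (u u' : Fin n → EuclideanSpace ℝ (Fin d)) :
    (inner ℝ (tpow u) (tpow u') : ℝ) = ∏ j, (inner ℝ (u j) (u' j) : ℝ) := by
  simp only [tpow, PiLp.inner_apply, RCLike.inner_apply, starRingEnd_apply, star_trivial,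
    WithLp.equiv_symm_apply, WithLp.equiv_apply, PiLp.toLp_apply]
  rw [Finset.prod_univ_sum]
  simp [Finset.prod_mul_distrib]

lemma sum_choose_sq (n : ℕ) : ∑ k ∈ range (n+1), n.choose k * n.choose k = (2*n).choose n := by
  rw [two_mul, Nat.add_choose_eq, Finset.Nat.sum_antidiagonal_eq_sum_range_succ_mk]
  refine Finset.sum_congr rfl fun k hk => ?_
  rw [Nat.choose_symm (Nat.lt_succ_iff.mp (Finset.mem_range.mp hk))]

theorem sig_norm_concat_two_segments {d : ℕ} (v w : EuclideanSpace ℝ (Fin d))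
    (hvw : inner ℝ v w = (0 : ℝ)) (hv : ‖v‖ = 1 / 2) (hw : ‖w‖ = 1 / 2) (n : ℕ)
    (X : EuclideanSpace ℝ (Fin n → Fin d))
    (hX : X = ∑ k ∈ Finset.range (n + 1),
      ((k.factorial * (n - k).factorial : ℕ) : ℝ)⁻¹ •
        tpow (fun j : Fin n => if (j : ℕ) < k then v else w)) :
    ‖(n.factorial : ℝ) • X‖ ^ 2 =
      ((2 * n).factorial : ℝ) / (2 ^ (2 * n) * (n.factorial : ℝ) ^ 2) := by
  have T : ℕ → EuclideanSpace ℝ (Fin n → Fin d) :=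
    fun k => tpow (fun j : Fin n => if (j : ℕ) < k then v else w)
  have hwv : (inner ℝ w v : ℝ) = 0 := by rw [real_inner_comm]; exact hvw
  have hvv : (inner ℝ v v : ℝ) = 4⁻¹ := by
    rw [real_inner_self_eq_norm_sq, hv]; norm_num
  have hww : (inner ℝ w w : ℝ) = 4⁻¹ := by
    rw [real_inner_self_eq_norm_sq, hw]; norm_num
  have key : ∀ k ∈ range (n+1), ∀ k' ∈ range (n+1),
      (inner ℝ (tpow (fun j : Fin n => if (j : ℕ) < k then v else w))
        (tpow (fun j : Fin n => if (j : ℕ) < k' then v else w)) : ℝ) =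
        if k = k' then (4:ℝ)⁻¹ ^ n else 0 := by
    intro k hk k' hk'
    rw [inner_tpow]
    rcases eq_or_ne k k' with rfl | hne
    · rw [if_pos rfl]
      have h : ∀ j : Fin n, (inner ℝ (if (j:ℕ) < k then v else w)
          (if (j:ℕ) < k then v else w) : ℝ) = 4⁻¹ := by
        intro j; by_cases h : (j : ℕ) < k <;> simp only [h, ↓reduceIte, hvv, hww]
      rw [Finset.prod_congr rfl (fun j _ => h j)]
      simp [Finset.prod_const]
    · rw [if_neg hne]
      rcases hne.lt_or_gt with h | h
      · -- k < k', use j = k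
        have hkn : k < n := lt_of_lt_of_le h (Nat.lt_succ_iff.mp (Finset.mem_range.mp hk'))
        refine Finset.prod_eq_zero (Finset.mem_univ (⟨k, hkn⟩ : Fin n)) ?_
        simp [h, hwv]
      · have hkn : k' < n := lt_of_lt_of_le h (Nat.lt_succ_iff.mp (Finset.mem_range.mp hk))
        refine Finset.prod_eq_zero (Finset.mem_univ (⟨k', hkn⟩ : Fin n)) ?_
        simp [h, hvw]
  set c : ℕ → ℝ := fun k => ((k.factorial * (n - k).factorial : ℕ) : ℝ)⁻¹ with hc
  have hXX : ‖X‖ ^ 2 = ∑ k ∈ range (n+1), c k * c k * (4:ℝ)⁻¹ ^ n := by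
    rw [← real_inner_self_eq_norm_sq, hX]
    rw [sum_inner]
    refine Finset.sum_congr rfl fun k hk => ?_
    rw [inner_sum]
    rw [Finset.sum_eq_single k]
    · rw [real_inner_smul_left, real_inner_smul_right, key k hk k hk, if_pos rfl]; ring
    · intro k' hk' hne
      rw [real_inner_smul_left, real_inner_smul_right, key k hk k' hk',
        if_neg (fun h => hne h.symm)]
      ring
    · intro h; exact absurd hk h
  have hnc : ∀ k ∈ range (n+1), (n.factorial : ℝ) * c k = (n.choose k : ℝ) := by
    intro k hk
    have hkn := Nat.lt_succ_iff.mp (Finset.mem_range.mp hk)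
    have := Nat.choose_mul_factorial_mul_factorial hkn
    have hpos : ((k.factorial * (n - k).factorial : ℕ) : ℝ) ≠ 0 := by positivity
    rw [hc]
    field_simp
    rw [← this]; push_cast; ring
  rw [norm_smul, mul_pow, hXX, Finset.mul_sum]
  have : ∀ k ∈ range (n+1),
      ‖(n.factorial : ℝ)‖ ^ 2 * (c k * c k * (4:ℝ)⁻¹ ^ n) =
      (n.choose k * n.choose k : ℕ) * (4:ℝ)⁻¹ ^ n := by
    intro k hk
    rw [Real.norm_eq_abs, sq_abs]
    push_cast
    rw [← hnc k hk]
    ring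
  rw [Finset.sum_congr rfl this, ← Finset.sum_mul, ← Nat.cast_sum, sum_choose_sq]
  have h1 := Nat.choose_mul_factorial_mul_factorial (Nat.le_mul_of_pos_left n (by norm_num) : n ≤ 2 * n)
  have h2 : 2 * n - n = n := by omega
  rw [h2] at h1
  have hfp : (0:ℝ) < (n.factorial : ℝ) := by positivity
  rw [eq_div_iff (by positivity), ← h1]
  push_cast
  have h2n : ((2:ℝ)) ^ (2*n) = 4 ^ n := by rw [pow_mul]; norm_num
  rw [h2n]
  have h4n : ((4:ℝ)⁻¹) ^ n * 4 ^ n = 1 := by rw [← mul_pow]; norm_num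
  linear_combination (((2*n).choose n : ℝ) * (n.factorial:ℝ)^2) * h4n
end

section
/- Let p(t_1,...,t_m) = |∑_{j=1}^m l_j e^{i t_j}|^2 with l_j > 0 and ∑ l_j = 1. For h = log p restricted to the first m−1 variables with the last fixed at t, the Hessian at the diagonal point t* = (t,...,t) satisfies ∂²_{qr} h(t*) = −2 l_q(1−l_q) if q=r and 2 l_q l_r if q ≠ r, and its determinant equals −(−2)^{m−1} ∏_{j=1}^m l_j up to sign; specifically |det| = 2^{m−1} ∏_{j=1}^m l_j. -/
open Finset

lemma det_aux {m : ℕ} (a : Fin m → ℝ) :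
    (Matrix.of fun q r : Fin m =>
        if q = r then -2 * a q * (1 - a q) else 2 * a q * a r).det =
      (-2) ^ m * (∏ q, a q) * (1 - ∑ q, a q) := by
  have hM : (Matrix.of fun q r : Fin m =>
        if q = r then -2 * a q * (1 - a q) else 2 * a q * a r) =
      (-2 : ℝ) • (Matrix.diagonal a * (1 + Matrix.replicateCol Unit (fun _ => (-1 : ℝ)) * Matrix.replicateRow Unit a)) := by
    ext q r
    simp [Matrix.mul_apply, Matrix.diagonal, Matrix.one_apply, mul_add, Finset.mul_sum,
      Matrix.replicateCol, Matrix.replicateRow, Matrix.smul_apply]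
    by_cases h : q = r <;> simp [h] <;> ring
  rw [hM, Matrix.det_smul, Matrix.det_mul, Matrix.det_diagonal,
    Matrix.det_one_add_replicateCol_mul_replicateRow]
  simp [dotProduct, smul_eq_mul]
  ring


set_option maxHeartbeats 2000000 in
lemma hess_aux {m : ℕ} (a : Fin m → ℝ) (b t : ℝ) (hsum : (∑ j, a j) + b = 1)
    (H : (Fin m → ℝ) → ℝ)
    (hH : ∀ s, H s = Real.log
      (((∑ j, a j * Real.cos (s j)) + b * Real.cos t) ^ 2 +
       ((∑ j, a j * Real.sin (s j)) + b * Real.sin t) ^ 2))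
    (q r : Fin m) :
    iteratedFDeriv ℝ 2 H (fun _ => t) ![Pi.single q 1, Pi.single r 1] =
      if q = r then -2 * a q * (1 - a q) else 2 * a q * a r := by
  classical
  set x₀ : Fin m → ℝ := fun _ => t with hx₀
  set C : (Fin m → ℝ) → ℝ := fun s => (∑ j, a j * Real.cos (s j)) + b * Real.cos t with hCdef
  set S : (Fin m → ℝ) → ℝ := fun s => (∑ j, a j * Real.sin (s j)) + b * Real.sin t with hSdef
  set F : (Fin m → ℝ) → ℝ := fun s => C s * C s + S s * S s with hFdef
  have hHF : H = fun s => Real.log (F s) := by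
    funext s; rw [hH s, hFdef]
    congr 1
    simp only [hCdef, hSdef]
    ring
  set C' : (Fin m → ℝ) → (Fin m → ℝ) →L[ℝ] ℝ :=
    fun x => ∑ j, (a j * -Real.sin (x j)) • ContinuousLinearMap.proj j with hC'def
  set S' : (Fin m → ℝ) → (Fin m → ℝ) →L[ℝ] ℝ :=
    fun x => ∑ j, (a j * Real.cos (x j)) • ContinuousLinearMap.proj j with hS'def
  have hproj : ∀ (j : Fin m) (x : Fin m → ℝ), HasFDerivAt (fun s : Fin m → ℝ => s j)
      (ContinuousLinearMap.proj j : (Fin m → ℝ) →L[ℝ] ℝ) x :=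
    fun j x => hasFDerivAt_apply j x
  have hC : ∀ x, HasFDerivAt C (C' x) x := by
    intro x
    have h : HasFDerivAt (fun s : Fin m → ℝ => ∑ j, a j * Real.cos (s j))
        (∑ j, (a j * -Real.sin (x j)) • (ContinuousLinearMap.proj j : (Fin m → ℝ) →L[ℝ] ℝ)) x := by
      refine HasFDerivAt.fun_sum fun j _ => ?_
      have h2 : HasDerivAt (fun y : ℝ => a j * Real.cos y) (a j * -Real.sin (x j)) (x j) :=
        (Real.hasDerivAt_cos (x j)).const_mul (a j)
      exact h2.comp_hasFDerivAt (f := fun s : Fin m → ℝ => s j) x (hproj j x)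
    exact h.add_const _
  have hS : ∀ x, HasFDerivAt S (S' x) x := by
    intro x
    have h : HasFDerivAt (fun s : Fin m → ℝ => ∑ j, a j * Real.sin (s j))
        (∑ j, (a j * Real.cos (x j)) • (ContinuousLinearMap.proj j : (Fin m → ℝ) →L[ℝ] ℝ)) x := by
      refine HasFDerivAt.fun_sum fun j _ => ?_
      have h2 : HasDerivAt (fun y : ℝ => a j * Real.sin y) (a j * Real.cos (x j)) (x j) :=
        (Real.hasDerivAt_sin (x j)).const_mul (a j)
      exact h2.comp_hasFDerivAt (f := fun s : Fin m → ℝ => s j) x (hproj j x)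
    exact h.add_const _
  set D : (Fin m → ℝ) → (Fin m → ℝ) →L[ℝ] ℝ :=
    fun x => (C x • C' x + C x • C' x) + (S x • S' x + S x • S' x) with hDdef
  have hF : ∀ x, HasFDerivAt F (D x) x := fun x => ((hC x).mul (hC x)).add ((hS x).mul (hS x))
  have hDapp : ∀ x v, D x v = 2 * C x * (∑ j, (a j * -Real.sin (x j)) * v j)
      + 2 * S x * (∑ j, (a j * Real.cos (x j)) * v j) := by
    intro x v
    simp [hDdef, hC'def, hS'def, ContinuousLinearMap.sum_apply]
    ring
  have hCx₀ : C x₀ = Real.cos t := by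
    have h1 : (∑ j, a j * Real.cos t) + b * Real.cos t = ((∑ j, a j) + b) * Real.cos t := by
      rw [add_mul, Finset.sum_mul]
    simp only [hCdef, hx₀, h1, hsum, one_mul]
  have hSx₀ : S x₀ = Real.sin t := by
    have h1 : (∑ j, a j * Real.sin t) + b * Real.sin t = ((∑ j, a j) + b) * Real.sin t := by
      rw [add_mul, Finset.sum_mul]
    simp only [hSdef, hx₀, h1, hsum, one_mul]
  have hFx₀ : F x₀ = 1 := by
    rw [hFdef]; simp only [hCx₀, hSx₀]
    rw [← Real.cos_sq_add_sin_sq t]; ring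
  have hD0 : D x₀ = 0 := by
    apply ContinuousLinearMap.ext; intro v
    rw [hDapp]
    have h1 : ∑ j, (a j * -Real.sin (x₀ j)) * v j = -Real.sin t * ∑ j, a j * v j := by
      rw [Finset.mul_sum]
      refine Finset.sum_congr rfl fun j _ => ?_
      simp only [hx₀]; ring
    have h2 : ∑ j, (a j * Real.cos (x₀ j)) * v j = Real.cos t * ∑ j, a j * v j := by
      rw [Finset.mul_sum]
      refine Finset.sum_congr rfl fun j _ => ?_
      simp only [hx₀]; ring
    rw [h1, h2, hCx₀, hSx₀]
    simp; ring
  have hC'diff : DifferentiableAt ℝ C' x₀ := by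
    refine DifferentiableAt.fun_sum fun j _ => ?_
    refine DifferentiableAt.smul_const ?_ _
    fun_prop
  have hS'diff : DifferentiableAt ℝ S' x₀ := by
    refine DifferentiableAt.fun_sum fun j _ => ?_
    refine DifferentiableAt.smul_const ?_ _
    fun_prop
  have hCd : DifferentiableAt ℝ C x₀ := (hC x₀).differentiableAt
  have hSd : DifferentiableAt ℝ S x₀ := (hS x₀).differentiableAt
  have hDdiff : DifferentiableAt ℝ D x₀ :=
    ((hCd.smul hC'diff).add (hCd.smul hC'diff)).add ((hSd.smul hS'diff).add (hSd.smul hS'diff))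
  -- eventual positivity of F
  have hUev : ∀ᶠ x in nhds x₀, 0 < F x := by
    have h1 : ContinuousAt F x₀ := (hF x₀).differentiableAt.continuousAt
    have h2 : ∀ᶠ y in nhds (F x₀), 0 < y := by
      rw [hFx₀]; exact eventually_gt_nhds one_pos
    exact h1.eventually h2
  have hfderivH : fderiv ℝ H =ᶠ[nhds x₀] fun x => (F x)⁻¹ • D x := by
    filter_upwards [hUev] with x hx
    have h : HasFDerivAt H ((F x)⁻¹ • D x) x := by
      rw [hHF]
      exact (Real.hasDerivAt_log (ne_of_gt hx)).comp_hasFDerivAt x (hF x)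
    exact h.fderiv
  have hsecond : fderiv ℝ (fderiv ℝ H) x₀ = fderiv ℝ D x₀ := by
    rw [hfderivH.fderiv_eq]
    have hinv : HasFDerivAt (fun x => (F x)⁻¹) (0 : (Fin m → ℝ) →L[ℝ] ℝ) x₀ := by
      have h := (hasDerivAt_inv (x := F x₀) (by rw [hFx₀]; norm_num)).comp_hasFDerivAt x₀ (hF x₀)
      rwa [hD0, smul_zero] at h
    have hG := hinv.fun_smul hDdiff.hasFDerivAt
    have hz : ContinuousLinearMap.smulRight (0 : (Fin m → ℝ) →L[ℝ] ℝ) (D x₀) = 0 := by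
      ext v; simp
    rw [hFx₀, hD0] at hG
    simp only [inv_one, one_smul] at hG
    have hz2 : ContinuousLinearMap.smulRight (0 : (Fin m → ℝ) →L[ℝ] ℝ)
        (0 : (Fin m → ℝ) →L[ℝ] ℝ) = 0 := by ext v; simp
    rw [hG.fderiv, hz2, add_zero]
  have key : iteratedFDeriv ℝ 2 H x₀ ![Pi.single q 1, Pi.single r 1] =
      fderiv ℝ D x₀ (Pi.single q 1) (Pi.single r 1) := by
    rw [iteratedFDeriv_two_apply, hsecond]
    simp
  rw [key]
  -- swap to scalar function
  have hflip : fderiv ℝ D x₀ (Pi.single q 1) (Pi.single r 1) =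
      fderiv ℝ (fun y => D y (Pi.single r 1)) x₀ (Pi.single q 1) := by
    rw [fderiv_clm_apply hDdiff (differentiableAt_const _)]
    simp
  rw [hflip]
  have hsingle : ∀ (i : Fin m) (c : Fin m → ℝ),
      ∑ j, c j * (Pi.single i 1 : Fin m → ℝ) j = c i := by
    intro i c
    simp [Pi.single_apply, mul_ite]
  have hsimp : (fun y => D y (Pi.single r 1)) =
      fun y => 2 * C y * (a r * -Real.sin (y r)) + 2 * S y * (a r * Real.cos (y r)) := by
    funext y
    rw [hDapp, hsingle r, hsingle r]
  rw [hsimp]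
  -- compute the derivative of the explicit scalar function
  have h1 : HasDerivAt (fun z : ℝ => a r * -Real.sin z) (a r * -Real.cos (x₀ r)) (x₀ r) :=
    ((Real.hasDerivAt_sin (x₀ r)).neg).const_mul (a r)
  have h2 : HasDerivAt (fun z : ℝ => a r * Real.cos z) (a r * -Real.sin (x₀ r)) (x₀ r) :=
    (Real.hasDerivAt_cos (x₀ r)).const_mul (a r)
  have hf1 : HasFDerivAt (fun y : Fin m → ℝ => a r * -Real.sin (y r))
      ((a r * -Real.cos (x₀ r)) • (ContinuousLinearMap.proj r : (Fin m → ℝ) →L[ℝ] ℝ)) x₀ :=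
    h1.comp_hasFDerivAt (f := fun y : Fin m → ℝ => y r) x₀ (hproj r x₀)
  have hf2 : HasFDerivAt (fun y : Fin m → ℝ => a r * Real.cos (y r))
      ((a r * -Real.sin (x₀ r)) • (ContinuousLinearMap.proj r : (Fin m → ℝ) →L[ℝ] ℝ)) x₀ :=
    h2.comp_hasFDerivAt (f := fun y : Fin m → ℝ => y r) x₀ (hproj r x₀)
  have hc1 : HasFDerivAt (fun y => 2 * C y) ((2:ℝ) • C' x₀) x₀ := (hC x₀).const_mul 2
  have hc2 : HasFDerivAt (fun y => 2 * S y) ((2:ℝ) • S' x₀) x₀ := (hS x₀).const_mul 2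
  have hΦ := (hc1.fun_mul hf1).fun_add (hc2.fun_mul hf2)
  rw [hΦ.fderiv]
  have hC'app : C' x₀ (Pi.single q (1:ℝ)) = a q * -Real.sin t := by
    simp only [hC'def, ContinuousLinearMap.sum_apply, ContinuousLinearMap.smul_apply,
      ContinuousLinearMap.proj_apply, smul_eq_mul]
    rw [hsingle q (fun j => a j * -Real.sin (x₀ j))]
  have hS'app : S' x₀ (Pi.single q (1:ℝ)) = a q * Real.cos t := by
    simp only [hS'def, ContinuousLinearMap.sum_apply, ContinuousLinearMap.smul_apply,
      ContinuousLinearMap.proj_apply, smul_eq_mul]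
    rw [hsingle q (fun j => a j * Real.cos (x₀ j))]
  have hprojapp : (ContinuousLinearMap.proj r : (Fin m → ℝ) →L[ℝ] ℝ) (Pi.single q 1)
      = if q = r then (1:ℝ) else 0 := by
    simp only [ContinuousLinearMap.proj_apply, Pi.single_apply]
    by_cases h : q = r
    · simp [h]
    · simp [h, Ne.symm h]
  simp only [ContinuousLinearMap.add_apply, ContinuousLinearMap.smul_apply, smul_eq_mul,
    hC'app, hS'app, hprojapp, hCx₀, hSx₀]
  have hx₀r : x₀ r = t := rfl
  rw [hx₀r]
  have hpyth := Real.sin_sq_add_cos_sq t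
  by_cases h : q = r
  · subst h
    simp only [eq_self_iff_true, if_true, mul_one]
    linear_combination (2 * a q ^ 2 - 2 * a q) * hpyth
  · simp only [if_neg h, mul_zero]
    linear_combination (2 * a q * a r) * hpyth


/-- Hessian of `h = log p` (with `p(t) = |∑ l_j e^{i t_j}|²`, the last variable fixed at `t`)
at the diagonal point: entries `−2 l_q (1 − l_q)` on the diagonal, `2 l_q l_r` off it,
with determinant of absolute value `2^m ∏ l_j` (here there are `m` free variables and
`m + 1` weights). -/
theorem hessian_log_p_at_diagonal {m : ℕ} (l : Fin (m + 1) → ℝ)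
    (hl : ∀ j, 0 < l j) (hsum : ∑ j, l j = 1) (t : ℝ)
    (p : (Fin (m + 1) → ℝ) → ℝ)
    (hp : ∀ s, p s = ‖∑ j, (l j : ℂ) * Complex.exp (Complex.I * s j)‖ ^ 2)
    (H : (Fin m → ℝ) → ℝ)
    (hH : ∀ s : Fin m → ℝ, H s = Real.log (p (Fin.snoc s t))) :
    (∀ q r : Fin m,
        iteratedFDeriv ℝ 2 H (fun _ => t) ![Pi.single q 1, Pi.single r 1] =
          if q = r then -2 * l q.castSucc * (1 - l q.castSucc)
          else 2 * l q.castSucc * l r.castSucc) ∧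
      |(Matrix.of fun q r : Fin m =>
          if q = r then -2 * l q.castSucc * (1 - l q.castSucc)
          else 2 * l q.castSucc * l r.castSucc).det| =
        2 ^ m * ∏ j, l j := by
  have hsum' : (∑ q : Fin m, l q.castSucc) + l (Fin.last m) = 1 := by
    rw [← Fin.sum_univ_castSucc]; exact hsum
  have habs : ∀ z : ℂ, ‖z‖ ^ 2 = z.re ^ 2 + z.im ^ 2 := by
    intro z; rw [Complex.sq_norm, Complex.normSq_apply]; ring
  have hre : ∀ (j : Fin (m + 1)) (x : ℝ),
      ((l j : ℂ) * Complex.exp (Complex.I * (x : ℂ))).re = l j * Real.cos x := by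
    intro j x
    rw [mul_comm Complex.I, Complex.re_ofReal_mul, Complex.exp_ofReal_mul_I_re]
  have him : ∀ (j : Fin (m + 1)) (x : ℝ),
      ((l j : ℂ) * Complex.exp (Complex.I * (x : ℂ))).im = l j * Real.sin x := by
    intro j x
    rw [mul_comm Complex.I, Complex.im_ofReal_mul, Complex.exp_ofReal_mul_I_im]
  have hre' : ∀ w : Fin (m + 1) → ℝ,
      (∑ j, (l j : ℂ) * Complex.exp (Complex.I * w j)).re = ∑ j, l j * Real.cos (w j) := by
    intro w; rw [Complex.re_sum]; exact Finset.sum_congr rfl fun j _ => hre j (w j)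
  have him' : ∀ w : Fin (m + 1) → ℝ,
      (∑ j, (l j : ℂ) * Complex.exp (Complex.I * w j)).im = ∑ j, l j * Real.sin (w j) := by
    intro w; rw [Complex.im_sum]; exact Finset.sum_congr rfl fun j _ => him j (w j)
  have hH' : ∀ s : Fin m → ℝ, H s = Real.log
      (((∑ j, l j.castSucc * Real.cos (s j)) + l (Fin.last m) * Real.cos t) ^ 2 +
       ((∑ j, l j.castSucc * Real.sin (s j)) + l (Fin.last m) * Real.sin t) ^ 2) := by
    intro s
    rw [hH s, hp, habs, hre' (Fin.snoc s t), him' (Fin.snoc s t),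
      Fin.sum_univ_castSucc, Fin.sum_univ_castSucc]
    simp [Fin.snoc_castSucc, Fin.snoc_last]
  constructor
  · intro q r
    exact hess_aux (fun q => l q.castSucc) (l (Fin.last m)) t hsum' H hH' q r
  · have hdet := det_aux (fun q : Fin m => l q.castSucc)
    rw [hdet]
    have h1 : 1 - ∑ q : Fin m, l q.castSucc = l (Fin.last m) := by linarith
    rw [h1, abs_mul, abs_mul, abs_pow, abs_neg, abs_two,
      abs_of_pos (Finset.prod_pos fun q _ => hl _), abs_of_pos (hl _),
      Fin.prod_univ_castSucc]
    ring
end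

section
/- Let b_1, ..., b_{n−1} be defined recursively by b_1 = κΓ_1 + 1 and b_{i+1} = κΓ_{i+1} + κΓ_{i+1}∑_{s=1}^{i} b_s + b_i for i = 1,...,n−2, where κ > 0 and Γ_i ≥ 0. Then for each i, b_i = 1 + κ∑_{s=1}^{i} sΓ_s + O(κ²) as κ → 0; more precisely b_i − 1 − κ∑_{s=1}^{i} sΓ_s is a polynomial in κ with lowest-order term κ² ξ_2^i where ξ_2^i = ∑_{1≤s_1<s_2≤i} (∑_{s=1}^{s_1} sΓ_s)Γ_{s_2}. -/
open Asymptotics Filter Finset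

/-- First-order coefficient `A_i = ∑_{s=1}^i s Γ_s`. -/
def slopeA (Γ : ℕ → ℝ) (i : ℕ) : ℝ := ∑ s ∈ Finset.Icc 1 i, (s : ℝ) * Γ s

/-- Second-order coefficient `ξ₂^i`. -/
def slopeX (Γ : ℕ → ℝ) (i : ℕ) : ℝ :=
  ∑ s₂ ∈ Finset.Icc 2 i, ∑ s₁ ∈ Finset.Ico 1 s₂, slopeA Γ s₁ * Γ s₂

lemma pow_succ_isBigO (m : ℕ) :
    (fun κ : ℝ => κ ^ (m + 1)) =O[nhdsWithin 0 (Set.Ioi 0)] fun κ => κ ^ m := by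
  have h1 : Tendsto (fun κ : ℝ => κ) (nhdsWithin 0 (Set.Ioi 0)) (nhds 0) :=
    (continuous_id.tendsto 0).mono_left nhdsWithin_le_nhds
  have := (h1.isBigO_one ℝ).mul (isBigO_refl (fun κ : ℝ => κ ^ m) (nhdsWithin 0 (Set.Ioi 0)))
  simpa [pow_succ, mul_comm] using this

lemma slope_key {n : ℕ} (hn : 2 ≤ n) (Γ : ℕ → ℝ) (b : ℝ → ℕ → ℝ)
    (hb1 : ∀ κ : ℝ, b κ 1 = κ * Γ 1 + 1)
    (hbrec : ∀ κ : ℝ, ∀ i, 1 ≤ i → i ≤ n - 2 →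
      b κ (i + 1) = κ * Γ (i + 1) + κ * Γ (i + 1) * (∑ s ∈ Finset.Icc 1 i, b κ s) + b κ i) :
    ∀ i, 1 ≤ i → i ≤ n - 1 →
      (fun κ : ℝ => b κ i - 1 - κ * slopeA Γ i - κ ^ 2 * slopeX Γ i)
        =O[nhdsWithin 0 (Set.Ioi 0)] fun κ : ℝ => κ ^ 3 := by
  set l := nhdsWithin (0 : ℝ) (Set.Ioi 0) with hl
  intro i
  induction i using Nat.strong_induction_on with
  | _ i IH =>
    intro h1 h2
    match i, h1, h2, IH with
    | 1, _, _, _ =>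
      have hz : (fun κ : ℝ => b κ 1 - 1 - κ * slopeA Γ 1 - κ ^ 2 * slopeX Γ 1)
          = fun _ => (0 : ℝ) := by
        funext κ
        have hIcc : Finset.Icc 2 1 = (∅ : Finset ℕ) := Finset.Icc_eq_empty (by norm_num)
        simp [hb1 κ, slopeA, slopeX, hIcc]
      rw [hz]
      exact isBigO_zero _ _
    | (p + 2), _, h2, IH =>
      have hp1 : 1 ≤ p + 1 := by omega
      have hp2 : p + 1 ≤ n - 2 := by omega
      -- the exact recursion for the remainder
      have hid : (fun κ : ℝ => b κ (p + 2) - 1 - κ * slopeA Γ (p + 2) - κ ^ 2 * slopeX Γ (p + 2))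
          = fun κ : ℝ =>
            (b κ (p + 1) - 1 - κ * slopeA Γ (p + 1) - κ ^ 2 * slopeX Γ (p + 1)) +
            κ * Γ (p + 2) *
              (∑ s ∈ Finset.Icc 1 (p + 1),
                ((b κ s - 1 - κ * slopeA Γ s - κ ^ 2 * slopeX Γ s) + κ ^ 2 * slopeX Γ s)) := by
        funext κ
        have hA : slopeA Γ (p + 2) = slopeA Γ (p + 1) + ((p : ℝ) + 2) * Γ (p + 2) := by
          show (∑ s ∈ Finset.Icc 1 (p + 1 + 1), (s : ℝ) * Γ s)
            = (∑ s ∈ Finset.Icc 1 (p + 1), (s : ℝ) * Γ s) + ((p : ℝ) + 2) * Γ (p + 1 + 1)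
          rw [Finset.sum_Icc_succ_top (by omega : 1 ≤ p + 1 + 1)]
          push_cast; ring
        have hXX : slopeX Γ (p + 2) = slopeX Γ (p + 1) +
            (∑ s₁ ∈ Finset.Icc 1 (p + 1), slopeA Γ s₁) * Γ (p + 2) := by
          show (∑ s₂ ∈ Finset.Icc 2 (p + 1 + 1), ∑ s₁ ∈ Finset.Ico 1 s₂, slopeA Γ s₁ * Γ s₂)
            = (∑ s₂ ∈ Finset.Icc 2 (p + 1), ∑ s₁ ∈ Finset.Ico 1 s₂, slopeA Γ s₁ * Γ s₂) +
              (∑ s₁ ∈ Finset.Icc 1 (p + 1), slopeA Γ s₁) * Γ (p + 1 + 1)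
          rw [Finset.sum_Icc_succ_top (by omega : 2 ≤ p + 1 + 1), Finset.Ico_add_one_right_eq_Icc,
            ← Finset.sum_mul]
        have hS : ∑ s ∈ Finset.Icc 1 (p + 1), b κ s =
            (∑ s ∈ Finset.Icc 1 (p + 1), (b κ s - 1 - κ * slopeA Γ s - κ ^ 2 * slopeX Γ s)) +
            ((p : ℝ) + 1) + κ * (∑ s ∈ Finset.Icc 1 (p + 1), slopeA Γ s) +
            κ ^ 2 * (∑ s ∈ Finset.Icc 1 (p + 1), slopeX Γ s) := by
          have hb' : ∀ s ∈ Finset.Icc 1 (p + 1), b κ s =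
              (b κ s - 1 - κ * slopeA Γ s - κ ^ 2 * slopeX Γ s) + 1 + κ * slopeA Γ s +
              κ ^ 2 * slopeX Γ s := fun s _ => by ring
          rw [Finset.sum_congr rfl hb', Finset.sum_add_distrib, Finset.sum_add_distrib,
            Finset.sum_add_distrib, Finset.sum_const, ← Finset.mul_sum, ← Finset.mul_sum,
            Nat.card_Icc]
          simp only [nsmul_eq_mul, mul_one, Nat.add_sub_cancel]
          push_cast; ring
        rw [hbrec κ (p + 1) hp1 hp2, hA, hXX, hS, Finset.sum_add_distrib, ← Finset.mul_sum]
        ring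
      rw [hid]
      have hprev : (fun κ : ℝ => b κ (p + 1) - 1 - κ * slopeA Γ (p + 1) - κ ^ 2 * slopeX Γ (p + 1))
          =O[l] fun κ : ℝ => κ ^ 3 := IH (p + 1) (by omega) (by omega) (by omega)
      refine hprev.add ?_
      -- second term: κ * Γ(p+2) * T with T =O κ²
      have hT : (fun κ : ℝ => ∑ s ∈ Finset.Icc 1 (p + 1),
          ((b κ s - 1 - κ * slopeA Γ s - κ ^ 2 * slopeX Γ s) + κ ^ 2 * slopeX Γ s))
          =O[l] fun κ : ℝ => κ ^ 2 := by
        apply Asymptotics.IsBigO.fun_sum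
        intro s hs
        have hs1 : 1 ≤ s := (Finset.mem_Icc.mp hs).1
        have hs2 : s ≤ n - 1 := by
          have := (Finset.mem_Icc.mp hs).2; omega
        have h3 : (fun κ : ℝ => b κ s - 1 - κ * slopeA Γ s - κ ^ 2 * slopeX Γ s)
            =O[l] fun κ : ℝ => κ ^ 3 := IH s (by
            have := (Finset.mem_Icc.mp hs).2; omega) hs1 hs2
        refine (h3.trans (pow_succ_isBigO 2)).add ?_
        have : (fun κ : ℝ => κ ^ 2 * slopeX Γ s) = fun κ : ℝ => slopeX Γ s * κ ^ 2 := by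
          funext κ; ring
        rw [this]
        exact (isBigO_refl (fun κ : ℝ => κ ^ 2) l).const_mul_left _
      have hmul : (fun κ : ℝ => κ * Γ (p + 2)) =O[l] fun κ : ℝ => κ := by
        have : (fun κ : ℝ => κ * Γ (p + 2)) = fun κ : ℝ => Γ (p + 2) * κ := by
          funext κ; ring
        rw [this]
        exact (isBigO_refl (fun κ : ℝ => κ) l).const_mul_left _
      have := hmul.mul hT
      have heq : (fun κ : ℝ => κ * κ ^ 2) = fun κ : ℝ => κ ^ 3 := by
        funext κ; ring
      rw [heq] at this
      exact this

/-- Expansion in `κ` of the recursively defined slopes `b_i`: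
`b_i = 1 + κ ∑_{s=1}^i s Γ_s + κ² ξ₂^i + O(κ³)` as `κ → 0⁺`, where
`ξ₂^i = ∑_{1 ≤ s₁ < s₂ ≤ i} (∑_{s=1}^{s₁} s Γ_s) Γ_{s₂}`. -/
theorem slope_recursion_expansion {n : ℕ} (hn : 2 ≤ n)
    (Γ : ℕ → ℝ) (hΓ : ∀ i, 0 ≤ Γ i)
    (b : ℝ → ℕ → ℝ)
    (hb1 : ∀ κ : ℝ, b κ 1 = κ * Γ 1 + 1)
    (hbrec : ∀ κ : ℝ, ∀ i, 1 ≤ i → i ≤ n - 2 →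
      b κ (i + 1) = κ * Γ (i + 1) + κ * Γ (i + 1) * (∑ s ∈ Finset.Icc 1 i, b κ s) + b κ i) :
    ∀ i, 1 ≤ i → i ≤ n - 1 →
      ((fun κ : ℝ => b κ i - 1 - κ * ∑ s ∈ Finset.Icc 1 i, (s : ℝ) * Γ s)
          =O[nhdsWithin 0 (Set.Ioi 0)] fun κ : ℝ => κ ^ 2) ∧
        ((fun κ : ℝ => b κ i - 1 - κ * ∑ s ∈ Finset.Icc 1 i, (s : ℝ) * Γ s -
            κ ^ 2 * ∑ s₂ ∈ Finset.Icc 2 i, ∑ s₁ ∈ Finset.Ico 1 s₂,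
              (∑ s ∈ Finset.Icc 1 s₁, (s : ℝ) * Γ s) * Γ s₂)
          =O[nhdsWithin 0 (Set.Ioi 0)] fun κ : ℝ => κ ^ 3) := by
  intro i h1 h2
  have hkey := slope_key hn Γ b hb1 hbrec i h1 h2
  constructor
  · have h1' : (fun κ : ℝ => b κ i - 1 - κ * ∑ s ∈ Finset.Icc 1 i, (s : ℝ) * Γ s)
        = fun κ : ℝ => (b κ i - 1 - κ * slopeA Γ i - κ ^ 2 * slopeX Γ i) +
            κ ^ 2 * slopeX Γ i := by
      funext κ; simp only [slopeA]; ring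
    rw [h1']
    refine (hkey.trans (pow_succ_isBigO 2)).add ?_
    have : (fun κ : ℝ => κ ^ 2 * slopeX Γ i) = fun κ : ℝ => slopeX Γ i * κ ^ 2 := by
      funext κ; ring
    rw [this]
    exact (isBigO_refl (fun κ : ℝ => κ ^ 2) _).const_mul_left _
  · have h2' : (fun κ : ℝ => b κ i - 1 - κ * ∑ s ∈ Finset.Icc 1 i, (s : ℝ) * Γ s -
        κ ^ 2 * ∑ s₂ ∈ Finset.Icc 2 i, ∑ s₁ ∈ Finset.Ico 1 s₂,
          (∑ s ∈ Finset.Icc 1 s₁, (s : ℝ) * Γ s) * Γ s₂)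
        = fun κ : ℝ => b κ i - 1 - κ * slopeA Γ i - κ ^ 2 * slopeX Γ i := by
      funext κ; simp only [slopeA, slopeX]
    rw [h2']
    exact hkey
end
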